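/- arXiv:math/9811042 — 2 statements merged into one kernel-verified Lean document; each statement's English description precedes it below -/
import Mathlib

section
/- For arbitrary measurable sets A, B in ℝ^n, the (n-1)-dimensional Hausdorff measure of the measure-theoretic boundary of A ∪ B is at most the measure of the part of the measure-theoretic boundary of A outside the measure-theoretic interior of B, plus the measure of the part of the measure-theoretic boundary of B outside the measure-theoretic closure of A. -/
open MeasureTheory Metric Set Filter
open scoped ENNReal Topology symmDiff

noncomputable section

variable {n : ℕ}

/-- `E` has Lebesgue density `d` at `x`. -/
def HasDensity (E : Set (EuclideanSpace ℝ (Fin n))) (x : EuclideanSpace ℝ (Fin n))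
    (d : ℝ≥0∞) : Prop :=
  Tendsto (fun r : ℝ => volume (E ∩ ball x r) / volume (ball x r)) (𝓝[>] 0) (𝓝 d)

/-- Measure-theoretic interior: points of density 1. -/
def mInterior (E : Set (EuclideanSpace ℝ (Fin n))) : Set (EuclideanSpace ℝ (Fin n)) :=
  {x | HasDensity E x 1}

/-- Measure-theoretic exterior: points of density 0. -/
def mExterior (E : Set (EuclideanSpace ℝ (Fin n))) : Set (EuclideanSpace ℝ (Fin n)) :=
  {x | HasDensity E x 0}

/-- Measure-theoretic boundary. -/
def mBoundary (E : Set (EuclideanSpace ℝ (Fin n))) : Set (EuclideanSpace ℝ (Fin n)) :=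
  (mInterior E ∪ mExterior E)ᶜ

/-- Measure-theoretic closure. -/
def mClosure (E : Set (EuclideanSpace ℝ (Fin n))) : Set (EuclideanSpace ℝ (Fin n)) :=
  (mExterior E)ᶜ

/-- Relative perimeter of `E` in `U`, via `H^{n-1}` of the measure-theoretic boundary. -/
def perim (E U : Set (EuclideanSpace ℝ (Fin n))) : ℝ≥0∞ :=
  μH[(n : ℝ) - 1] (mBoundary E ∩ U)

def HasFinitePerimeter (E U : Set (EuclideanSpace ℝ (Fin n))) : Prop :=
  MeasurableSet E ∧ perim E U < ⊤

/-- `A ⊂⊂ U`. -/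
def CpctIn (A U : Set (EuclideanSpace ℝ (Fin n))) : Prop :=
  IsCompact (closure A) ∧ closure A ⊆ U

def SubMinimizing (E U : Set (EuclideanSpace ℝ (Fin n))) : Prop :=
  ∀ F : Set (EuclideanSpace ℝ (Fin n)), MeasurableSet F →
    CpctIn (E ∆ F) U → perim E U ≤ perim (E ∩ F) U

def SuperMinimizing (E U : Set (EuclideanSpace ℝ (Fin n))) : Prop :=
  ∀ F : Set (EuclideanSpace ℝ (Fin n)), MeasurableSet F →
    CpctIn (E ∆ F) U → perim E U ≤ perim (E ∪ F) U

def Minimizing (E U : Set (EuclideanSpace ℝ (Fin n))) : Prop :=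
  ∀ F : Set (EuclideanSpace ℝ (Fin n)), MeasurableSet F →
    CpctIn (E ∆ F) U → perim E U ≤ perim F U

/-- The normalized representative: contains all density-1 points, no density-0 points. -/
def Normalized (E : Set (EuclideanSpace ℝ (Fin n))) : Prop :=
  mInterior E ⊆ E ∧ Disjoint E (mExterior E)

/-- The region in the unit ball bounded by a unit-radius spherical cap orthogonal
to the unit sphere: intersection of the unit ball with a unit ball whose center is
at distance `√2`. -/
def capRegion (n : ℕ) (hn : 0 < n) : Set (EuclideanSpace ℝ (Fin n)) :=
  ball 0 1 ∩ ball (EuclideanSpace.single (⟨0, hn⟩ : Fin n) (Real.sqrt 2)) 1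

/-- The dimensional constant `δ(n)`. -/
def deltaConst (n : ℕ) (hn : 0 < n) : ℝ≥0∞ :=
  volume (capRegion n hn) / volume (ball (0 : EuclideanSpace ℝ (Fin n)) 1)

lemma hasDensity_one_mono {E F : Set (EuclideanSpace ℝ (Fin n))}
    {x : EuclideanSpace ℝ (Fin n)} (h : HasDensity E x 1) (hEF : E ⊆ F) :
    HasDensity F x 1 := by
  refine tendsto_of_tendsto_of_tendsto_of_le_of_le h tendsto_const_nhds
    (fun r => ENNReal.div_le_div_right
      (measure_mono (inter_subset_inter_left _ hEF)) _) (fun r => ?_)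
  exact ENNReal.div_le_of_le_mul (by simpa using measure_mono inter_subset_right)

lemma hasDensity_zero_union {A B : Set (EuclideanSpace ℝ (Fin n))}
    {x : EuclideanSpace ℝ (Fin n)} (hA : HasDensity A x 0) (hB : HasDensity B x 0) :
    HasDensity (A ∪ B) x 0 := by
  have h := hA.add hB
  rw [add_zero] at h
  refine tendsto_of_tendsto_of_tendsto_of_le_of_le tendsto_const_nhds h
    (fun r => zero_le) (fun r => ?_)
  calc volume ((A ∪ B) ∩ ball x r) / volume (ball x r)
      ≤ (volume (A ∩ ball x r) + volume (B ∩ ball x r)) / volume (ball x r) := by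
        refine ENNReal.div_le_div_right ?_ _
        rw [union_inter_distrib_right]
        exact measure_union_le _ _
    _ = _ := ENNReal.add_div

theorem mBoundary_union_le (n : ℕ) (A B : Set (EuclideanSpace ℝ (Fin n)))
    (hA : MeasurableSet A) (hB : MeasurableSet B) :
    μH[(n : ℝ) - 1] (mBoundary (A ∪ B)) ≤
      μH[(n : ℝ) - 1] (mBoundary A ∩ (mInterior B)ᶜ) +
      μH[(n : ℝ) - 1] (mBoundary B ∩ (mClosure A)ᶜ) := by
  have hsub : mBoundary (A ∪ B) ⊆
      (mBoundary A ∩ (mInterior B)ᶜ) ∪ (mBoundary B ∩ (mClosure A)ᶜ) := by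
    intro x hx
    simp only [mBoundary, mClosure, mem_compl_iff, mem_union, not_or] at hx
    obtain ⟨hxi, hxe⟩ := hx
    have hBi : x ∉ mInterior B := fun h =>
      hxi (hasDensity_one_mono h subset_union_right)
    by_cases hAe : x ∈ mExterior A
    · right
      refine ⟨?_, fun h => h hAe⟩
      simp only [mBoundary, mem_compl_iff, mem_union, not_or]
      exact ⟨hBi, fun hBe => hxe (hasDensity_zero_union hAe hBe)⟩
    · left
      refine ⟨?_, hBi⟩
      simp only [mBoundary, mem_compl_iff, mem_union, not_or]
      exact ⟨fun h => hxi (hasDensity_one_mono h subset_union_left), hAe⟩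
  calc μH[(n : ℝ) - 1] (mBoundary (A ∪ B))
      ≤ μH[(n : ℝ) - 1] ((mBoundary A ∩ (mInterior B)ᶜ) ∪
          (mBoundary B ∩ (mClosure A)ᶜ)) := measure_mono hsub
    _ ≤ _ := measure_union_le _ _
end
end

section
/- For arbitrary measurable sets A, B in ℝ^n, H^{n-1}(∂_m(A ∩ B)) ≤ H^{n-1}(∂_m A ∩ B^i_m) + H^{n-1}(∂_m B ∩ Ā_m), where B^i_m is the measure-theoretic interior of B and Ā_m the measure-theoretic closure of A. -/
open MeasureTheory Metric Set Filter
open scoped ENNReal Topology symmDiff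

noncomputable section

variable {n : ℕ}

lemma hd_zero_mono {E F : Set (EuclideanSpace ℝ (Fin n))} {x : EuclideanSpace ℝ (Fin n)}
    (hFE : F ⊆ E) (h : HasDensity E x 0) : HasDensity F x 0 := by
  refine tendsto_of_tendsto_of_tendsto_of_le_of_le tendsto_const_nhds h
    (fun r => zero_le) (fun r => ?_)
  exact ENNReal.div_le_div_right
    (measure_mono (inter_subset_inter_left _ hFE)) _

lemma hd_zero_union {E F : Set (EuclideanSpace ℝ (Fin n))} {x : EuclideanSpace ℝ (Fin n)}
    (hE : HasDensity E x 0) (hF : HasDensity F x 0) : HasDensity (E ∪ F) x 0 := by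
  have hsum : Tendsto (fun r : ℝ =>
      volume (E ∩ ball x r) / volume (ball x r) + volume (F ∩ ball x r) / volume (ball x r))
      (𝓝[>] 0) (𝓝 0) := by
    simpa using hE.add hF
  refine tendsto_of_tendsto_of_tendsto_of_le_of_le tendsto_const_nhds hsum
    (fun r => zero_le) (fun r => ?_)
  rw [← ENNReal.add_div]
  refine ENNReal.div_le_div_right ?_ _
  rw [union_inter_distrib_right]
  exact measure_union_le _ _

lemma hd_compl_iff {E : Set (EuclideanSpace ℝ (Fin n))} {x : EuclideanSpace ℝ (Fin n)}
    (hE : MeasurableSet E) : HasDensity E x 1 ↔ HasDensity Eᶜ x 0 := by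
  have key : ∀ᶠ r : ℝ in 𝓝[>] 0,
      volume (Eᶜ ∩ ball x r) / volume (ball x r)
        = 1 - volume (E ∩ ball x r) / volume (ball x r) := by
    filter_upwards [self_mem_nhdsWithin] with r (hr : 0 < r)
    have c0 : volume (ball x r) ≠ 0 := (measure_ball_pos volume x hr).ne'
    have ctop : volume (ball x r) ≠ ⊤ := measure_ball_lt_top.ne
    have hsum : volume (E ∩ ball x r) + volume (Eᶜ ∩ ball x r) = volume (ball x r) := by
      rw [inter_comm E, inter_comm Eᶜ, ← Set.diff_eq]
      exact measure_inter_add_diff _ hE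
    have hdiv : volume (Eᶜ ∩ ball x r) / volume (ball x r)
        + volume (E ∩ ball x r) / volume (ball x r) = 1 := by
      rw [← ENNReal.add_div, add_comm, hsum, ENNReal.div_self c0 ctop]
    refine ENNReal.eq_sub_of_add_eq ?_ hdiv
    exact (ENNReal.div_lt_top ((measure_mono inter_subset_right).trans_lt
      measure_ball_lt_top).ne c0).ne
  constructor
  · intro h
    have : Tendsto (fun r : ℝ =>
        1 - volume (E ∩ ball x r) / volume (ball x r)) (𝓝[>] 0) (𝓝 (1 - 1)) :=
      ENNReal.Tendsto.sub tendsto_const_nhds h (Or.inl ENNReal.one_ne_top)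
    simpa [HasDensity] using this.congr' (key.mono fun r h => h.symm)
  · intro h
    have : Tendsto (fun r : ℝ =>
        1 - volume (Eᶜ ∩ ball x r) / volume (ball x r)) (𝓝[>] 0) (𝓝 (1 - 0)) :=
      ENNReal.Tendsto.sub tendsto_const_nhds h (Or.inl ENNReal.one_ne_top)
    have key' : ∀ᶠ r : ℝ in 𝓝[>] 0,
        volume (E ∩ ball x r) / volume (ball x r)
          = 1 - volume (Eᶜ ∩ ball x r) / volume (ball x r) := by
      filter_upwards [key, self_mem_nhdsWithin] with r hk (hr : 0 < r)
      have c0 : volume (ball x r) ≠ 0 := (measure_ball_pos volume x hr).ne'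
      have h1 : volume (E ∩ ball x r) / volume (ball x r) ≤ 1 := by
        rw [ENNReal.div_le_iff c0 measure_ball_lt_top.ne, one_mul]
        exact measure_mono inter_subset_right
      rw [hk, ENNReal.sub_sub_cancel ENNReal.one_ne_top h1]
    simpa [HasDensity] using this.congr' (key'.mono fun r h => h.symm)

lemma hd_not_both {E : Set (EuclideanSpace ℝ (Fin n))} {x : EuclideanSpace ℝ (Fin n)}
    (h0 : HasDensity E x 0) (h1 : HasDensity E x 1) : False := by
  have : (0 : ℝ≥0∞) = 1 := tendsto_nhds_unique h0 h1
  exact zero_ne_one this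

theorem mBoundary_inter_le (n : ℕ) (A B : Set (EuclideanSpace ℝ (Fin n)))
    (hA : MeasurableSet A) (hB : MeasurableSet B) :
    μH[(n : ℝ) - 1] (mBoundary (A ∩ B)) ≤
      μH[(n : ℝ) - 1] (mBoundary A ∩ mInterior B) +
      μH[(n : ℝ) - 1] (mBoundary B ∩ mClosure A) := by
  have hsub : mBoundary (A ∩ B) ⊆
      (mBoundary A ∩ mInterior B) ∪ (mBoundary B ∩ mClosure A) := by
    intro x hx
    have hx' : ¬ HasDensity (A ∩ B) x 1 ∧ ¬ HasDensity (A ∩ B) x 0 := by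
      have := hx
      simp only [mBoundary, mInterior, mExterior, Set.mem_compl_iff, Set.mem_union,
        Set.mem_setOf_eq, not_or] at this
      exact this
    obtain ⟨hx1, hx0⟩ := hx'
    have hA0 : ¬ HasDensity A x 0 := fun h => hx0 (hd_zero_mono inter_subset_left h)
    have hB0 : ¬ HasDensity B x 0 := fun h => hx0 (hd_zero_mono inter_subset_right h)
    by_cases hBbd : x ∈ mBoundary B
    · exact Or.inr ⟨hBbd, hA0⟩
    · have hB1 : HasDensity B x 1 := by
        simp only [mBoundary, mInterior, mExterior, Set.mem_compl_iff, Set.mem_union,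
          Set.mem_setOf_eq, not_or, not_and_or, not_not] at hBbd
        rcases hBbd with h | h
        · exact h
        · exact absurd h hB0
      have hA1 : ¬ HasDensity A x 1 := by
        intro hA1
        apply hx1
        rw [hd_compl_iff (hA.inter hB)]
        rw [Set.compl_inter]
        exact hd_zero_union ((hd_compl_iff hA).mp hA1) ((hd_compl_iff hB).mp hB1)
      exact Or.inl ⟨by simp only [mBoundary, mInterior, mExterior, Set.mem_compl_iff,
        Set.mem_union, Set.mem_setOf_eq, not_or]; exact ⟨hA1, hA0⟩, hB1⟩
  calc μH[(n : ℝ) - 1] (mBoundary (A ∩ B))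
      ≤ μH[(n : ℝ) - 1] ((mBoundary A ∩ mInterior B) ∪ (mBoundary B ∩ mClosure A)) :=
        measure_mono hsub
    _ ≤ μH[(n : ℝ) - 1] (mBoundary A ∩ mInterior B) +
        μH[(n : ℝ) - 1] (mBoundary B ∩ mClosure A) := measure_union_le _ _
end
end
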